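/- arXiv:2304.04324 — 6 statements merged into one kernel-verified Lean document; each statement's English description precedes it below -/
import Mathlib

section
/- For all positive integers n and k, the multiplicity of k in S(n) is given by #_k S(n) = Σ_ℓ (2^ℓ − |n + 1 − (k+1)·2^ℓ|), where the sum ranges over all integers ℓ ≥ 0 satisfying (n+2)/(k+2) ≤ 2^ℓ ≤ n/k (equivalently, ⌈log₂((n+2)/(k+2))⌉ ≤ ℓ ≤ ⌊log₂(n/k)⌋), with an empty sum equal to 0. -/
/-!
Split `N` into `p` parts as evenly as possible: the parts are `⌊(N + i) / p⌋` for `i < p`.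
Halving each part of the split of `N` into `p` parts gives the split into `2p` parts, and the
recursion `n ↦ ⌊(n-1)/2⌋, ⌈(n-1)/2⌉` is just halving `n + 1`. So the nodes of the recursion tree
of `S n` at depth `ℓ`, plus one, are the parts of the split of `n + 1` into `2 ^ ℓ` parts. (Parts
`≤ 1` correspond to empty subtrees, which do not matter when `k ≥ 1`.) The part `k + 1` occurs
`(2^ℓ - |n + 1 - (k + 1) 2^ℓ|)⁺` times in that split, and this is positive exactly when
`(n + 2)/(k + 2) ≤ 2^ℓ ≤ n/k`.
-/

open Nat

/-- The multiset `S n` of interval lengths: `S 0 = ∅` and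
`S n = {n} ∪ S ⌊(n-1)/2⌋ ∪ S ⌈(n-1)/2⌉` (union adding multiplicities). -/
def S : ℕ → Multiset ℕ
  | 0 => 0
  | n + 1 => (n + 1) ::ₘ (S (n / 2) + S ((n + 1) / 2))
decreasing_by all_goals omega

theorem Multiset.map_range_two_mul {α : Type*} (f : ℕ → α) (p : ℕ) :
    (Multiset.range (2 * p)).map f =
      (Multiset.range p).map (fun i => f (2 * i)) +
        (Multiset.range p).map (fun i => f (2 * i + 1)) := by
  induction p with
  | zero => simp
  | succ p ih =>
    rw [show 2 * (p + 1) = 2 * p + 1 + 1 by ring]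
    simp only [Multiset.range_succ, Multiset.map_cons, ih, Multiset.cons_add, Multiset.add_cons,
      Multiset.cons_swap]

def balancedParts (N p : ℕ) : Multiset ℕ :=
  (Multiset.range p).map fun i => (N + i) / p

theorem balancedParts_one (N : ℕ) : balancedParts N 1 = {N} := by
  simp [balancedParts]

theorem balancedParts_two_mul (N p : ℕ) :
    balancedParts N (2 * p) = balancedParts (N / 2) p + balancedParts ((N + 1) / 2) p := by
  unfold balancedParts
  rw [Multiset.map_range_two_mul]
  congr 1 <;> refine Multiset.map_congr rfl fun i _ => ?_ <;>
    rw [← Nat.div_div_eq_div_mul] <;> congr 1 <;> omega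

theorem count_balancedParts (N p j : ℕ) :
    (Multiset.count j (balancedParts N p) : ℤ) = max ((p : ℤ) - |(N : ℤ) - j * p|) 0 := by
  rcases Nat.eq_zero_or_pos p with rfl | hp
  · simp [balancedParts]
  have hparts : (Finset.range p).filter (fun i => j = (N + i) / p) =
      Finset.Ico (j * p - N) (min p (j * p + p - N)) := by
    ext i
    simp only [Finset.mem_filter, Finset.mem_range, Finset.mem_Ico, eq_comm (a := j),
      Nat.div_eq_iff hp]
    omega
  have hcount : Multiset.count j (balancedParts N p) = min p (j * p + p - N) - (j * p - N) := by
    rw [balancedParts, Multiset.count_map, ← Finset.range_val, ← Finset.filter_val]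
    exact (congrArg Finset.card hparts).trans (Nat.card_Ico _ _)
  rw [hcount, ← Nat.cast_mul, abs_eq_max_neg]
  generalize j * p = a
  omega

theorem count_balancedParts_eq_zero_of_le {N p j : ℕ} (hN : N ≤ p) (hj : 1 < j) :
    Multiset.count j (balancedParts N p) = 0 := by
  refine Multiset.count_eq_zero.mpr fun hmem => ?_
  obtain ⟨i, hi, rfl⟩ := Multiset.mem_map.mp hmem
  have : (N + i) / p < 2 := Nat.div_lt_of_lt_mul (by rw [Multiset.mem_range] at hi; omega)
  omega

theorem count_S_eq_sum_count_balancedParts {k : ℕ} (hk : 0 < k) :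
    ∀ {n B : ℕ}, n < 2 ^ B →
      Multiset.count k (S n) =
        ∑ ℓ ∈ Finset.range B, Multiset.count (k + 1) (balancedParts (n + 1) (2 ^ ℓ))
  | 0, B, _ => by
    simp [S, count_balancedParts_eq_zero_of_le Nat.one_le_two_pow (show 1 < k + 1 by omega)]
  | m + 1, 0, h => by simp at h
  | m + 1, B + 1, h => by
    have hB : m + 1 < 2 * 2 ^ B := by rwa [_root_.pow_succ'] at h
    have ih₁ := count_S_eq_sum_count_balancedParts hk (n := m / 2) (B := B) (by omega)
    have ih₂ := count_S_eq_sum_count_balancedParts hk (n := (m + 1) / 2) (B := B) (by omega)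
    rw [S, Multiset.count_cons, Multiset.count_add, ih₁, ih₂, ← Finset.sum_add_distrib,
      Finset.sum_range_succ', pow_zero, balancedParts_one, Multiset.count_singleton]
    simp only [_root_.pow_succ', balancedParts_two_mul, Multiset.count_add]
    congr 1
    · refine Finset.sum_congr rfl fun ℓ _ => ?_
      congr 3 <;> omega
    · simp

theorem div_le_and_le_div_iff_abs_sub_lt (n k p : ℕ) (hk : 0 < k) :
    ((n : ℚ) + 2) / ((k : ℚ) + 2) ≤ p ∧ (p : ℚ) ≤ (n : ℚ) / (k : ℚ) ↔
      |(n : ℤ) + 1 - ((k : ℤ) + 1) * p| < p := by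
  rw [div_le_iff₀ (by positivity), le_div_iff₀ (by exact_mod_cast hk), abs_lt]
  have hcast : ((n : ℚ) + 2 ≤ p * (k + 2) ∧ (p : ℚ) * k ≤ n) ↔
      ((n : ℤ) + 2 ≤ p * (k + 2) ∧ (p : ℤ) * k ≤ n) := by
    norm_cast
  rw [hcast]
  constructor <;> rintro ⟨h₁, h₂⟩ <;> constructor <;> linarith

theorem stmt0_general (n k : ℕ) (hk : 0 < k) :
    (Multiset.count k (S n) : ℤ) =
      ∑ ℓ ∈ (Finset.range (n + 1)).filter
          (fun ℓ => ((n : ℚ) + 2) / ((k : ℚ) + 2) ≤ 2 ^ ℓ ∧ (2 : ℚ) ^ ℓ ≤ (n : ℚ) / (k : ℚ)),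
        ((2 : ℤ) ^ ℓ - |(n : ℤ) + 1 - ((k : ℤ) + 1) * 2 ^ ℓ|) := by
  rw [count_S_eq_sum_count_balancedParts hk (n.lt_succ_self.trans Nat.lt_two_pow_self),
    Nat.cast_sum, Finset.sum_filter]
  refine Finset.sum_congr rfl fun ℓ _ => ?_
  have hcond := div_le_and_le_div_iff_abs_sub_lt n k (2 ^ ℓ) hk
  push_cast at hcond ⊢
  rw [count_balancedParts]
  push_cast
  split_ifs with h
  · exact max_eq_left (by linarith [hcond.mp h])
  · exact max_eq_right (by linarith [not_lt.mp (mt hcond.mpr h)])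

/-- Lemma 1: for positive integers `n, k`,
`#ₖ S(n) = Σ_ℓ (2^ℓ − |n+1−(k+1)·2^ℓ|)` where the sum is over all `ℓ ≥ 0`
with `(n+2)/(k+2) ≤ 2^ℓ ≤ n/k` (such `ℓ` necessarily satisfy `ℓ ≤ n`). -/
theorem stmt0 (n k : ℕ) (hn : 0 < n) (hk : 0 < k) :
    (Multiset.count k (S n) : ℤ) =
      ∑ ℓ ∈ (Finset.range (n + 1)).filter
          (fun ℓ => ((n : ℚ) + 2) / ((k : ℚ) + 2) ≤ 2 ^ ℓ ∧ (2 : ℚ) ^ ℓ ≤ (n : ℚ) / (k : ℚ)),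
        ((2 : ℤ) ^ ℓ - |(n : ℤ) + 1 - ((k : ℤ) + 1) * 2 ^ ℓ|) :=
  stmt0_general n k hk
end

section
/- For all integers n ≥ k ≥ 2: if k = ⌊n/2^ℓ⌋ for some integer ℓ with 0 ≤ ℓ ≤ ⌊log₂ n⌋ − 1, then #_k S(n) = 1 + (n mod 2^ℓ); if k = ⌊n/2^ℓ⌋ − 1 for some integer ℓ with 0 ≤ ℓ and 2^ℓ ≤ n/3, then #_k S(n) = 2^ℓ − 1 − (n mod 2^ℓ); and if neither of these two cases occurs, then #_k S(n) = 0. (For given n ≥ k ≥ 2 at most one of the first two cases can occur.) -/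
open Nat

/-! Writing `m = n + 1`, a subproblem of size `n` splits into subproblems of sizes `⌊m / 2⌋ - 1`
and `⌈m / 2⌉ - 1`, so the `2 ^ ℓ` subproblems at depth `ℓ` have sizes `(m + j) / 2 ^ ℓ - 1` for
`j < 2 ^ ℓ`, that is `n / 2 ^ ℓ` or `n / 2 ^ ℓ - 1`. Hence `k` can occur at depth `ℓ` only if
`k * 2 ^ ℓ ≤ n < (k + 2) * 2 ^ ℓ`; for `k ≥ 2` these windows are disjoint, so all copies of `k`
lie at a single depth, where they are counted directly. -/

/-- The multiplicity of `k ≥ 1` among the subproblems at depth `ℓ`: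
`min (2 ^ ℓ) (n + 1 - k * 2 ^ ℓ)` of them have size at least `k`. -/
def levelCount (n k ℓ : ℕ) : ℕ :=
  min (2 ^ ℓ) (n + 1 - k * 2 ^ ℓ) - min (2 ^ ℓ) (n + 1 - (k + 1) * 2 ^ ℓ)

lemma levelCount_zero (n k : ℕ) : levelCount n k 0 = if k = n then 1 else 0 := by
  simp only [levelCount, pow_zero, mul_one]
  split_ifs <;> omega

lemma levelCount_succ {k : ℕ} (hk : 1 ≤ k) (n ℓ : ℕ) :
    levelCount n k (ℓ + 1) = levelCount ((n - 1) / 2) k ℓ + levelCount (n / 2) k ℓ := by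
  simp only [levelCount, pow_succ, _root_.add_one_mul k, ← mul_assoc]
  have : 2 ^ ℓ ≤ k * 2 ^ ℓ := Nat.le_mul_of_pos_left _ hk
  omega

lemma count_S_eq_sum_levelCount {k : ℕ} (hk : 1 ≤ k) {n N : ℕ} (hN : n ≤ N) :
    (S n).count k = ∑ ℓ ∈ Finset.range N, levelCount n k ℓ := by
  induction n using Nat.strong_induction_on generalizing N with
  | _ n ih =>
    match n, N with
    | 0, N =>
      rw [S, Multiset.count_zero]
      refine (Finset.sum_eq_zero fun ℓ _ => ?_).symm
      have : 1 ≤ k * 2 ^ ℓ := Nat.one_le_iff_ne_zero.2 (by positivity)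
      simp only [levelCount]
      omega
    | m + 1, N + 1 =>
      rw [S, Multiset.count_cons, Multiset.count_add, ih _ (by omega) (N := N) (by omega),
        ih _ (by omega) (N := N) (by omega), Finset.sum_range_succ', levelCount_zero]
      simp only [levelCount_succ hk, Finset.sum_add_distrib, Nat.add_sub_cancel]

lemma bounds_of_levelCount_ne_zero {n k ℓ : ℕ} (h : levelCount n k ℓ ≠ 0) :
    k * 2 ^ ℓ ≤ n ∧ n < (k + 2) * 2 ^ ℓ := by
  simp only [levelCount, _root_.add_one_mul k, add_mul k 2] at h ⊢
  omega

lemma le_of_mul_two_pow_le_of_lt {n k a b : ℕ} (hk : 2 ≤ k) (ha : k * 2 ^ a ≤ n)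
    (hb : n < (k + 2) * 2 ^ b) : a ≤ b := by
  by_contra! hba
  have : k * (2 * 2 ^ b) ≤ k * 2 ^ a :=
    Nat.mul_le_mul_left k (pow_succ' 2 b ▸ Nat.pow_le_pow_right two_pos hba)
  nlinarith [Nat.zero_le (2 ^ b)]

lemma count_S_eq_levelCount {n k ℓ : ℕ} (hk : 2 ≤ k) (h₁ : k * 2 ^ ℓ ≤ n)
    (h₂ : n < (k + 2) * 2 ^ ℓ) : (S n).count k = levelCount n k ℓ := by
  have hℓ : ℓ < n := (Nat.lt_two_pow_self).trans_le (by nlinarith)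
  rw [count_S_eq_sum_levelCount (by omega) le_rfl,
    Finset.sum_eq_single_of_mem ℓ (Finset.mem_range.2 hℓ)]
  intro b _ hb
  by_contra h
  obtain ⟨hb₁, hb₂⟩ := bounds_of_levelCount_ne_zero h
  exact hb <| le_antisymm (le_of_mul_two_pow_le_of_lt hk hb₁ h₂)
    (le_of_mul_two_pow_le_of_lt hk h₁ hb₂)

lemma count_S_of_div_eq {n k ℓ : ℕ} (hk : 2 ≤ k) (h : n / 2 ^ ℓ = k) :
    (S n).count k = 1 + n % 2 ^ ℓ := by
  have hn := Nat.div_add_mod n (2 ^ ℓ)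
  have hr := Nat.mod_lt n (by positivity : 0 < 2 ^ ℓ)
  rw [h, mul_comm] at hn
  rw [count_S_eq_levelCount (ℓ := ℓ) hk (by omega) (by rw [add_mul]; omega)]
  simp only [levelCount, _root_.add_one_mul k]
  omega

lemma count_S_of_div_eq_succ {n k ℓ : ℕ} (hk : 2 ≤ k) (h : n / 2 ^ ℓ = k + 1) :
    (S n).count k = 2 ^ ℓ - 1 - n % 2 ^ ℓ := by
  have hn := Nat.div_add_mod n (2 ^ ℓ)
  have hr := Nat.mod_lt n (by positivity : 0 < 2 ^ ℓ)
  rw [h, mul_comm, _root_.add_one_mul k] at hn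
  rw [count_S_eq_levelCount (ℓ := ℓ) hk (by omega) (by rw [add_mul]; omega)]
  simp only [levelCount, _root_.add_one_mul k]
  omega

lemma count_S_eq_zero {n k : ℕ} (hk : 1 ≤ k) (h : ∀ ℓ, n / 2 ^ ℓ ≠ k ∧ n / 2 ^ ℓ ≠ k + 1) :
    (S n).count k = 0 := by
  rw [count_S_eq_sum_levelCount hk le_rfl]
  refine Finset.sum_eq_zero fun ℓ _ => ?_
  by_contra hne
  obtain ⟨h₁, h₂⟩ := bounds_of_levelCount_ne_zero hne
  have hlo := (Nat.le_div_iff_mul_le (by positivity)).2 h₁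
  have hhi := (Nat.div_lt_iff_lt_mul (by positivity)).2 h₂
  have hne := h ℓ
  omega

lemma two_le_div_two_pow_iff {n ℓ : ℕ} : 2 ≤ n / 2 ^ ℓ ↔ ℓ + 1 ≤ Nat.log 2 n := by
  rcases eq_or_ne n 0 with rfl | hn
  · simp
  rw [Nat.le_div_iff_mul_le (by positivity), ← pow_succ', Nat.le_log_iff_pow_le one_lt_two hn]

lemma three_le_div_two_pow_iff {n ℓ : ℕ} : 3 ≤ n / 2 ^ ℓ ↔ (2 : ℚ) ^ ℓ ≤ n / 3 := by
  rw [Nat.le_div_iff_mul_le (by positivity), le_div_iff₀ (by norm_num), mul_comm]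
  exact_mod_cast Iff.rfl

theorem stmt1_general (n k : ℕ) (hk : 2 ≤ k) :
    (∀ ℓ : ℕ, ℓ + 1 ≤ Nat.log 2 n → k = n / 2 ^ ℓ →
      Multiset.count k (S n) = 1 + n % 2 ^ ℓ) ∧
    (∀ ℓ : ℕ, (2 : ℚ) ^ ℓ ≤ (n : ℚ) / 3 → k = n / 2 ^ ℓ - 1 →
      (Multiset.count k (S n) : ℤ) = 2 ^ ℓ - 1 - ((n % 2 ^ ℓ : ℕ) : ℤ)) ∧
    ((¬ ∃ ℓ : ℕ, ℓ + 1 ≤ Nat.log 2 n ∧ k = n / 2 ^ ℓ) →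
      (¬ ∃ ℓ : ℕ, (2 : ℚ) ^ ℓ ≤ (n : ℚ) / 3 ∧ k = n / 2 ^ ℓ - 1) →
      Multiset.count k (S n) = 0) := by
  refine ⟨fun ℓ _ h => count_S_of_div_eq hk h.symm, fun ℓ h₃ h => ?_, fun h₁ h₂ => ?_⟩
  · have h₃ := three_le_div_two_pow_iff.2 h₃
    have hr := Nat.mod_lt n (by positivity : 0 < 2 ^ ℓ)
    rw [count_S_of_div_eq_succ (ℓ := ℓ) hk (by omega)]
    push_cast [Nat.sub_sub, Nat.cast_sub (by omega : 1 + n % 2 ^ ℓ ≤ 2 ^ ℓ)]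
    ring
  · refine count_S_eq_zero (by omega) fun ℓ =>
      ⟨fun h => h₁ ⟨ℓ, ?_, h.symm⟩, fun h => h₂ ⟨ℓ, ?_, ?_⟩⟩
    · exact two_le_div_two_pow_iff.1 (by omega)
    · exact three_le_div_two_pow_iff.1 (by omega)
    · omega

/-- Theorem (multiplicities in `S n` for `n ≥ k ≥ 2`). -/
theorem stmt1 (n k : ℕ) (hk : 2 ≤ k) (hkn : k ≤ n) :
    (∀ ℓ : ℕ, ℓ + 1 ≤ Nat.log 2 n → k = n / 2 ^ ℓ →
      Multiset.count k (S n) = 1 + n % 2 ^ ℓ) ∧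
    (∀ ℓ : ℕ, (2 : ℚ) ^ ℓ ≤ (n : ℚ) / 3 → k = n / 2 ^ ℓ - 1 →
      (Multiset.count k (S n) : ℤ) = 2 ^ ℓ - 1 - ((n % 2 ^ ℓ : ℕ) : ℤ)) ∧
    ((¬ ∃ ℓ : ℕ, ℓ + 1 ≤ Nat.log 2 n ∧ k = n / 2 ^ ℓ) →
      (¬ ∃ ℓ : ℕ, (2 : ℚ) ^ ℓ ≤ (n : ℚ) / 3 ∧ k = n / 2 ^ ℓ - 1) →
      Multiset.count k (S n) = 0) :=
  stmt1_general n k hk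
end

section
/- For every integer n ≥ 1, setting ℓ = ⌊log₂ n⌋, the multiplicity of 1 in S(n) satisfies: #_1 S(n) = 1 + (n mod 2^ℓ) if n ≥ 3·2^{ℓ−1} − 1, and #_1 S(n) = 2^{ℓ−1} if n < 3·2^{ℓ−1} − 1. -/
/-!
For `n ≥ 2` the ones of `S n` are those of its two halves, so `c n := #₁ S n` satisfies
`c n = c ⌊(n-1)/2⌋ + c ⌈(n-1)/2⌉`. Writing `n = 2^(ℓ+1) + m - 1` with `0 ≤ m ≤ 2^(ℓ+1)`, the two
halves are `2^ℓ + ⌊m/2⌋ - 1` and `2^ℓ + ⌈m/2⌉ - 1`, so induction on `ℓ` gives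
`c (2^(ℓ+1) + m - 1) = max m 2^ℓ`. For `ℓ + 1 = ⌊log₂ n⌋` the two cases of the theorem are the
two values of this maximum.
-/

open Nat

lemma count_one_S_add_two (n : ℕ) :
    Multiset.count 1 (S (n + 2)) = Multiset.count 1 (S ((n + 1) / 2)) +
      Multiset.count 1 (S ((n + 2) / 2)) := by
  rw [S, Multiset.count_cons_of_ne (by omega), Multiset.count_add]

lemma count_one_S_two_pow_add_sub_one (ℓ m : ℕ) (hm : m ≤ 2 ^ (ℓ + 1)) :
    Multiset.count 1 (S (2 ^ (ℓ + 1) + m - 1)) = max m (2 ^ ℓ) := by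
  induction ℓ generalizing m with
  | zero =>
    interval_cases m <;> simp [S]
  | succ ℓ ih =>
    have hpow : 2 ^ (ℓ + 2) = 2 * 2 ^ (ℓ + 1) := by ring
    have hhalf : 2 ^ (ℓ + 1) = 2 * 2 ^ ℓ := by ring
    have hpos : 1 ≤ 2 ^ ℓ := Nat.one_le_two_pow
    obtain ⟨k, hk⟩ : ∃ k, 2 ^ (ℓ + 2) + m - 1 = k + 2 := ⟨2 ^ (ℓ + 2) + m - 3, by omega⟩
    have hlow : (k + 1) / 2 = 2 ^ (ℓ + 1) + m / 2 - 1 := by omega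
    have hhigh : (k + 2) / 2 = 2 ^ (ℓ + 1) + (m + 1) / 2 - 1 := by omega
    rw [hk, count_one_S_add_two, hlow, hhigh, ih _ (by omega), ih _ (by omega)]
    omega

/-- The multiplicity of `1` in `S n`, with `ℓ = ⌊log₂ n⌋`:
it is `1 + (n mod 2^ℓ)` if `n ≥ 3·2^(ℓ-1) − 1` and `2^(ℓ-1)` otherwise. -/
theorem stmt2 (n : ℕ) (hn : 1 ≤ n) :
    ((3 : ℚ) * 2 ^ Nat.log 2 n / 2 - 1 ≤ (n : ℚ) →
      Multiset.count 1 (S n) = 1 + n % 2 ^ Nat.log 2 n) ∧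
    ((n : ℚ) < (3 : ℚ) * 2 ^ Nat.log 2 n / 2 - 1 →
      Multiset.count 1 (S n) = 2 ^ (Nat.log 2 n - 1)) := by
  obtain rfl | hn2 : n = 1 ∨ 2 ≤ n := by omega
  · exact ⟨fun _ => by simp [S], fun h => by norm_num at h⟩
  obtain ⟨ℓ, hlog⟩ : ∃ ℓ, Nat.log 2 n = ℓ + 1 :=
    ⟨Nat.log 2 n - 1, by have := Nat.log_pos one_lt_two hn2; omega⟩
  have hlo : 2 ^ (ℓ + 1) ≤ n := hlog ▸ Nat.pow_log_le_self 2 (by omega)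
  have hhi : n < 2 ^ (ℓ + 2) := by simpa [hlog] using Nat.lt_pow_succ_log_self one_lt_two n
  have hpow : 2 ^ (ℓ + 2) = 2 * 2 ^ (ℓ + 1) := by ring
  have hhalf : 2 ^ (ℓ + 1) = 2 * 2 ^ ℓ := by ring
  have hcount := count_one_S_two_pow_add_sub_one ℓ (n + 1 - 2 ^ (ℓ + 1)) (by omega)
  rw [show 2 ^ (ℓ + 1) + (n + 1 - 2 ^ (ℓ + 1)) - 1 = n by omega] at hcount
  have hmod : n % 2 ^ (ℓ + 1) = n - 2 ^ (ℓ + 1) := by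
    rw [Nat.mod_eq_sub_mod hlo, Nat.mod_eq_of_lt (by omega)]
  have hthreshold : (3 : ℚ) * 2 ^ (ℓ + 1) / 2 - 1 = ((3 * 2 ^ ℓ : ℕ) : ℚ) - 1 := by
    push_cast; ring
  rw [hlog, hcount, hmod, hthreshold, Nat.add_sub_cancel]
  constructor <;> intro h
  · have : 3 * 2 ^ ℓ ≤ n + 1 := by exact_mod_cast (by linarith : ((3 * 2 ^ ℓ : ℕ) : ℚ) ≤ n + 1)
    omega
  · have : n + 1 < 3 * 2 ^ ℓ := by exact_mod_cast (by linarith : (n + 1 : ℚ) < (3 * 2 ^ ℓ : ℕ))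
    omega
end

section
/- For all positive integers n and k, #_k S(n) = Σ_{ℓ≥0} Σ_{q ∈ Q^ℓ : k·2^ℓ + v(q) = n} 2^{u(q)}, where Q = {0,1,2}, and for q = (q_1,…,q_ℓ) ∈ Q^ℓ one defines v(q) = Σ_{i=1}^ℓ q_i·2^{ℓ−i} and u(q) = the number of indices i with q_i = 1 (the inner sum over the empty set is 0, and for ℓ = 0 the only tuple q has v(q) = 0 and u(q) = 0). -/
open Nat

/-!
Write `W k n ℓ` (`weightedCount`) for the inner sum of the theorem. Splitting off the last
digit `c` of `q` gives `v q = 2 v q' + c`, so `W k (n + 1) (ℓ + 1) = W k (n / 2) ℓ + W k ((n + 1) / 2) ℓ`: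
if `n + 1 = 2m + 1` the last digit must be `1`, contributing `2 W k m ℓ`, and if `n + 1 = 2m + 2`
it is `0` or `2`, contributing `W k (m + 1) ℓ + W k m ℓ`. Together with `W k n 0 = [k = n]`,
summing over `ℓ` shows that `n ↦ Σ_ℓ W k n ℓ` satisfies the recursion defining `#ₖ S(n)`.
-/

open Finset

section Digits

variable {ℓ : ℕ}

def digitValue (q : Fin ℓ → Fin 3) : ℕ :=
  ∑ i : Fin ℓ, (q i : ℕ) * 2 ^ (ℓ - 1 - (i : ℕ))

def onesCount (q : Fin ℓ → Fin 3) : ℕ :=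
  #{i | q i = 1}

lemma digitValue_snoc (q : Fin ℓ → Fin 3) (c : Fin 3) :
    digitValue (Fin.snoc q c : Fin (ℓ + 1) → Fin 3) = 2 * digitValue q + c := by
  simp only [digitValue, Fin.sum_univ_castSucc, Fin.snoc_castSucc, Fin.snoc_last,
    Fin.val_castSucc, Fin.val_last, Nat.add_sub_cancel, Nat.sub_self, pow_zero, mul_one,
    mul_sum]
  congr 1
  refine sum_congr rfl fun i _ => ?_
  rw [show ℓ - (i : ℕ) = ℓ - 1 - i + 1 by omega, pow_succ]
  ring

lemma onesCount_snoc (q : Fin ℓ → Fin 3) (c : Fin 3) :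
    onesCount (Fin.snoc q c : Fin (ℓ + 1) → Fin 3) = onesCount q + if c = 1 then 1 else 0 := by
  simp only [onesCount, card_filter, Fin.sum_univ_castSucc, Fin.snoc_castSucc,
    Fin.snoc_last]

end Digits

def weightedCount (k n ℓ : ℕ) : ℕ :=
  ∑ q ∈ univ.filter (fun q : Fin ℓ → Fin 3 => k * 2 ^ ℓ + digitValue q = n), 2 ^ onesCount q

lemma weightedCount_zero (k n : ℕ) : weightedCount k n 0 = if k = n then 1 else 0 := by
  split_ifs <;> simp_all [weightedCount, digitValue, onesCount]

lemma weightedCount_eq_zero_of_lt {k n ℓ : ℕ} (h : n < k * 2 ^ ℓ) : weightedCount k n ℓ = 0 :=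
  sum_eq_zero fun q hq => absurd (mem_filter.1 hq).2 (by omega)

lemma weightedCount_eq_sum_ite (k n ℓ : ℕ) :
    weightedCount k n ℓ =
      ∑ q : Fin ℓ → Fin 3, if k * 2 ^ ℓ + digitValue q = n then 2 ^ onesCount q else 0 :=
  sum_filter _ _

lemma weightedCount_succ (k n ℓ : ℕ) :
    weightedCount k n (ℓ + 1) =
      ∑ c : Fin 3, ∑ q : Fin ℓ → Fin 3,
        if 2 * (k * 2 ^ ℓ + digitValue q) + c = n then
          2 ^ (onesCount q + if c = 1 then 1 else 0) else 0 := by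
  rw [weightedCount_eq_sum_ite, ← (Fin.snocEquiv fun _ => Fin 3).sum_comp, Fintype.sum_prod_type]
  refine sum_congr rfl fun c _ => sum_congr rfl fun q _ => ?_
  rw [show (Fin.snocEquiv fun _ => Fin 3) (c, q) = Fin.snoc q c from rfl, digitValue_snoc,
    onesCount_snoc]
  congr 2
  ring

lemma weightedCount_succ_succ (k n ℓ : ℕ) :
    weightedCount k (n + 1) (ℓ + 1) =
      weightedCount k (n / 2) ℓ + weightedCount k ((n + 1) / 2) ℓ := by
  rw [weightedCount_succ, Fin.sum_univ_three, weightedCount_eq_sum_ite, weightedCount_eq_sum_ite,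
    ← sum_add_distrib, ← sum_add_distrib, ← sum_add_distrib]
  refine sum_congr rfl fun q _ => ?_
  simp only [Fin.val_zero, Fin.val_one, Fin.val_two, Fin.reduceEq, ↓reduceIte, add_zero, pow_succ]
  generalize k * 2 ^ ℓ + digitValue q = x
  generalize 2 ^ onesCount q = w
  split_ifs <;> omega

lemma finsum_nat_eq_zero_add {M : Type*} [AddCommMonoid M] {f : ℕ → M}
    (hf : (Function.support f).Finite) : ∑ᶠ n, f n = f 0 + ∑ᶠ n, f (n + 1) := by
  obtain ⟨N, hN⟩ := hf.bddAbove
  have hsupp : Function.support f ⊆ ↑(range (N + 1)) := fun n hn => by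
    simpa [Nat.lt_succ_iff] using hN hn
  have hsupp' : Function.support (fun n => f (n + 1)) ⊆ ↑(range N) := fun n hn => by
    simpa using hN hn
  rw [finsum_eq_sum_of_support_subset f hsupp, finsum_eq_sum_of_support_subset _ hsupp',
    sum_range_succ', add_comm]

lemma support_weightedCount_finite {k : ℕ} (hk : 0 < k) (n : ℕ) :
    (Function.support (weightedCount k n)).Finite :=
  (Set.finite_Iio (n + 1)).subset fun ℓ hℓ => by
    by_contra hlt
    refine hℓ (weightedCount_eq_zero_of_lt ?_)
    calc n < 2 ^ n := n.lt_two_pow_self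
      _ ≤ 2 ^ ℓ := Nat.pow_le_pow_right two_pos (by simp at hlt; omega)
      _ ≤ k * 2 ^ ℓ := Nat.le_mul_of_pos_left _ hk

theorem count_S_eq_finsum_weightedCount {k : ℕ} (hk : 0 < k) (n : ℕ) :
    Multiset.count k (S n) = ∑ᶠ ℓ, weightedCount k n ℓ := by
  induction n using Nat.strong_induction_on with
  | _ n ih =>
    match n with
    | 0 =>
      rw [S, Multiset.count_zero, finsum_eq_zero_of_forall_eq_zero]
      exact fun ℓ => weightedCount_eq_zero_of_lt (by positivity)
    | n + 1 =>
      rw [finsum_nat_eq_zero_add (support_weightedCount_finite hk _), weightedCount_zero, S,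
        Multiset.count_cons, Multiset.count_add, ih _ (by omega), ih _ (by omega)]
      simp only [weightedCount_succ_succ]
      rw [finsum_add_distrib (support_weightedCount_finite hk _)
        (support_weightedCount_finite hk _)]
      ring

theorem stmt3_general (n k : ℕ) (hk : 0 < k) :
    Multiset.count k (S n) =
      ∑ᶠ ℓ : ℕ, ∑ q ∈ Finset.univ.filter
          (fun q : Fin ℓ → Fin 3 =>
            k * 2 ^ ℓ + ∑ i : Fin ℓ, (q i : ℕ) * 2 ^ (ℓ - 1 - (i : ℕ)) = n),
        2 ^ (Finset.univ.filter fun i => q i = 1).card :=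
  count_S_eq_finsum_weightedCount hk n

/-- `#ₖ S(n) = Σ_{ℓ≥0} Σ_{q ∈ Q^ℓ : k·2^ℓ + v(q) = n} 2^(u(q))`, where `Q = {0,1,2}`,
`v(q) = Σᵢ qᵢ 2^(ℓ-i)` and `u(q)` is the number of digits of `q` equal to `1`. -/
theorem stmt3 (n k : ℕ) (hn : 0 < n) (hk : 0 < k) :
    Multiset.count k (S n) =
      ∑ᶠ ℓ : ℕ, ∑ q ∈ Finset.univ.filter
          (fun q : Fin ℓ → Fin 3 =>
            k * 2 ^ ℓ + ∑ i : Fin ℓ, (q i : ℕ) * 2 ^ (ℓ - 1 - (i : ℕ)) = n),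
        2 ^ (Finset.univ.filter fun i => q i = 1).card :=
  stmt3_general n k hk
end

section
/- For every integer n ≥ 1, the number C_1(n) of payphone permutations of type (C1) and size n satisfies C_1(n) = n · G(S(n−1)). -/
open Nat

/-- `G M = (∏_{k≥1} (#₂ₖ M + #₂ₖ₋₁ M)!) · 2^(∑_{k≥2} #₂ₖ M)`. -/
noncomputable def G (M : Multiset ℕ) : ℕ :=
  (∏ᶠ k ∈ Set.Ici (1 : ℕ), (M.count (2 * k) + M.count (2 * k - 1))!) *
    2 ^ ∑ᶠ k ∈ Set.Ici (2 : ℕ), M.count (2 * k)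

/-- The set of positions (numbered `0, …, n-1`) occupied before person `i`
takes a payphone, for the seating sequence `p` (person `j` takes position `p j`). -/
def occSet (n : ℕ) (p : Fin n → Fin n) (i : Fin n) : Set ℕ :=
  {x | ∃ j : Fin n, j < i ∧ (p j : ℕ) = x}

/-- Circular distance between positions `x` and `y` on a circle of `n` payphones. -/
def cdist (n x y : ℕ) : ℕ := min (Nat.dist x y) (n - Nat.dist x y)

/-- Circular distance from `x` to the occupied set `O`. -/
noncomputable def cdistTo (n : ℕ) (O : Set ℕ) (x : ℕ) : ℕ :=
  sInf {d | ∃ y ∈ O, cdist n x y = d}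

/-- Rule (C1): circular variant of (P1). -/
noncomputable def IsC1 (n : ℕ) (p : Fin n → Fin n) : Prop :=
  Function.Bijective p ∧ ∀ i : Fin n, 0 < (i : ℕ) →
    ∀ q : ℕ, q < n → q ∉ occSet n p i →
      cdistTo n (occSet n p i) q ≤ cdistTo n (occSet n p i) (p i)

/-- The number of distinct payphone permutations `π` (defined by `π (p i) = i`)
arising from seating sequences `p` of the type `T`. -/
noncomputable def payCount (n : ℕ) (T : (Fin n → Fin n) → Prop) : ℕ :=
  Nat.card {π : Equiv.Perm (Fin n) // ∃ p : Fin n → Fin n, T p ∧ ∀ i, π (p i) = i}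


/-!
Number the seats `0, …, n - 1`. Once some seats are taken, the free seats form one arc after each
occupied seat `y`, with `g_y = nextDist y - 1` seats (possibly none). Seat `c` of an arc of length
`g` is at distance `min c (g + 1 - c)` from the occupied ones, so rule (C1) picks a middle seat of
an arc of maximal level `K = ⌈g / 2⌉` and splits it into arcs of lengths `⌊(g - 1) / 2⌋` and
`⌈(g - 1) / 2⌉`. Hence the arcs that will ever appear have the lengths in `T = ∑_y S(g_y)`, and the
number of ways to complete the seating is `G(T)`. By induction this reduces to `∑_x G(T_x) = G(T)`
over the allowed seats `x`, where `T = g_x ::ₘ T_x`; grouping the seats by their arc, it follows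
from `G (g ::ₘ M) = levelCount (g ::ₘ M) K * evenFactor g * G M` and from the count
`evenFactor g * levelCount (S g) K` of allowed seats in an arc of length `g`. The first person
has `n` choices, each leaving a single arc of length `n - 1`.
-/

namespace Payphone

open Finset

lemma le_of_mem_S {m x : ℕ} (hx : x ∈ S m) : x ≤ m := by
  induction m using Nat.strong_induction_on generalizing x with
  | _ m ih =>
    match m, hx with
    | 0, hx => simp [S] at hx
    | k + 1, hx =>
      rw [S, Multiset.mem_cons, Multiset.mem_add] at hx
      rcases hx with rfl | hx | hx
      · rfl
      · have := ih (k / 2) (by omega) hx; omega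
      · have := ih ((k + 1) / 2) (by omega) hx; omega

lemma S_eq_cons {m : ℕ} (hm : 0 < m) : S m = m ::ₘ (S ((m - 1) / 2) + S (m / 2)) := by
  obtain ⟨k, rfl⟩ : ∃ k, m = k + 1 := ⟨m - 1, by omega⟩
  rw [S, Nat.add_sub_cancel]

/-- The number of elements `x ∈ M` with `⌈x / 2⌉ = k`, for `k ≥ 1`. -/
def levelCount (M : Multiset ℕ) (k : ℕ) : ℕ := M.count (2 * k) + M.count (2 * k - 1)

def evenFactor (g : ℕ) : ℕ := if g % 2 = 0 ∧ 4 ≤ g then 2 else 1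

lemma evenFactor_pos (g : ℕ) : 0 < evenFactor g := by
  unfold evenFactor
  split_ifs <;> omega

lemma levelCount_cons {g k : ℕ} (hg : 0 < g) (hk : 0 < k) (M : Multiset ℕ) :
    levelCount (g ::ₘ M) k = levelCount M k + if k = (g + 1) / 2 then 1 else 0 := by
  simp only [levelCount, Multiset.count_cons]
  split_ifs <;> omega

lemma levelCount_eq_zero {M : Multiset ℕ} {k : ℕ} (h : ∀ x ∈ M, x + 1 < 2 * k) :
    levelCount M k = 0 := by
  simp only [levelCount, Nat.add_eq_zero_iff, Multiset.count_eq_zero]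
  exact ⟨fun hx => by have := h _ hx; omega, fun hx => by have := h _ hx; omega⟩

lemma levelCount_sum {ι : Type*} (s : Finset ι) (f : ι → Multiset ℕ) (k : ℕ) :
    levelCount (∑ i ∈ s, f i) k = ∑ i ∈ s, levelCount (f i) k := by
  simp only [levelCount, Multiset.count_sum', Finset.sum_add_distrib]

lemma levelCount_S_self {g : ℕ} (hg : 0 < g) :
    levelCount (S g) ((g + 1) / 2) = if g ≤ 2 then g else 1 := by
  rcases Nat.lt_or_ge g 3 with h | h
  · interval_cases g <;> simp [S, levelCount]
  · have hchildren : levelCount (S ((g - 1) / 2) + S (g / 2)) ((g + 1) / 2) = 0 := by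
      refine levelCount_eq_zero fun x hx => ?_
      rcases Multiset.mem_add.1 hx with hx | hx <;> have := le_of_mem_S hx <;> omega
    rw [S_eq_cons hg, levelCount_cons hg (by omega), hchildren, if_pos rfl, if_neg (by omega)]

lemma G_eq_prod {M : Multiset ℕ} {N : ℕ} (hN : ∀ x ∈ M, x ≤ N) :
    G M = (∏ k ∈ Icc 1 N, (levelCount M k)!) * 2 ^ ∑ k ∈ Icc 2 N, M.count (2 * k) := by
  have hzero : ∀ k, N < k → levelCount M k = 0 := fun k hk =>
    levelCount_eq_zero fun x hx => by have := hN x hx; omega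
  have hprod : ∏ᶠ k ∈ Set.Ici 1, (levelCount M k)! = ∏ k ∈ Icc 1 N, (levelCount M k)! := by
    refine finprod_mem_eq_prod_of_subset _ (fun k ⟨hk1, hk⟩ => ?_) (fun k hk => (mem_Icc.1 hk).1)
    refine mem_Icc.2 ⟨hk1, not_lt.1 fun hNk => hk ?_⟩
    show (levelCount M k)! = 1
    rw [hzero k hNk, Nat.factorial_zero]
  have hsum : ∑ᶠ k ∈ Set.Ici 2, M.count (2 * k) = ∑ k ∈ Icc 2 N, M.count (2 * k) := by
    refine finsum_mem_eq_sum_of_subset _ (fun k ⟨hk2, hk⟩ => ?_) (fun k hk => (mem_Icc.1 hk).1)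
    refine mem_Icc.2 ⟨hk2, not_lt.1 fun hNk => hk ?_⟩
    exact Multiset.count_eq_zero.2 fun hx => by have := hN _ hx; omega
  exact congrArg₂ (· * 2 ^ ·) hprod hsum

lemma G_zero : G 0 = 1 := by
  simp [G_eq_prod (M := 0) (N := 0) (by simp)]

lemma G_cons {g : ℕ} (hg : 0 < g) (M : Multiset ℕ) :
    G (g ::ₘ M) = levelCount (g ::ₘ M) ((g + 1) / 2) * evenFactor g * G M := by
  set N := (g ::ₘ M).sum
  have hbound : ∀ x ∈ g ::ₘ M, x ≤ N := fun x hx => Multiset.le_sum_of_mem hx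
  have hgN := hbound g (Multiset.mem_cons_self g M)
  have hfact : ∀ k ∈ Icc 1 N, (levelCount (g ::ₘ M) k)! =
      (if k = (g + 1) / 2 then levelCount (g ::ₘ M) k else 1) * (levelCount M k)! := by
    intro k hk
    rw [levelCount_cons hg (mem_Icc.1 hk).1]
    split_ifs <;> simp [Nat.factorial_succ]
  have hpow : ∑ k ∈ Icc 2 N, (g ::ₘ M).count (2 * k) =
      ∑ k ∈ Icc 2 N, M.count (2 * k) + if g % 2 = 0 ∧ 4 ≤ g then 1 else 0 := by
    simp only [Multiset.count_cons, sum_add_distrib]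
    congr 1
    split_ifs with h
    · rw [sum_eq_single_of_mem (g / 2) (mem_Icc.2 ⟨by omega, by omega⟩), if_pos (by omega)]
      exact fun k _ hk => if_neg (by omega)
    · exact sum_eq_zero fun k hk => if_neg (by have := mem_Icc.1 hk; omega)
  rw [G_eq_prod hbound, G_eq_prod fun x hx => hbound x (Multiset.mem_cons_of_mem hx),
    prod_congr rfl hfact, prod_mul_distrib, prod_ite_eq' _ _ _,
    if_pos (mem_Icc.2 ⟨by omega, by omega⟩), hpow, pow_add, evenFactor]
  split_ifs <;> ring

lemma card_filter_min_eq {g K : ℕ} (hK : 0 < K) (hg : (g + 1) / 2 ≤ K) :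
    #{c ∈ Icc 1 g | min c (g + 1 - c) = K} = evenFactor g * levelCount (S g) K := by
  rcases Nat.lt_or_ge ((g + 1) / 2) K with hlt | heq
  · rw [levelCount_eq_zero fun x hx => by have := le_of_mem_S hx; omega, mul_zero,
      Finset.card_eq_zero, filter_eq_empty_iff]
    intro c _
    omega
  obtain rfl : K = (g + 1) / 2 := by omega
  rw [levelCount_S_self (by omega), evenFactor]
  rcases Nat.lt_or_ge g 3 with h | h
  · interval_cases g <;> decide
  · have hfilter : {c ∈ Icc 1 g | min c (g + 1 - c) = (g + 1) / 2} =
        if g % 2 = 0 then {g / 2, g / 2 + 1} else {(g + 1) / 2} := by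
      ext c
      split_ifs <;> simp only [mem_filter, mem_Icc, mem_insert, mem_singleton] <;> omega
    rw [hfilter]
    split_ifs <;> first | omega | simp

/-- The least positive `d` with `P d`, or `0` if there is none. -/
noncomputable def leastPos (P : ℕ → Prop) : ℕ := sInf {d | 0 < d ∧ P d}

section LeastPos

variable {P : ℕ → Prop}

lemma leastPos_spec (h : ∃ d, 0 < d ∧ P d) : 0 < leastPos P ∧ P (leastPos P) :=
  Nat.sInf_mem h

lemma leastPos_le {d : ℕ} (hd : 0 < d) (h : P d) : leastPos P ≤ d := Nat.sInf_le ⟨hd, h⟩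

lemma not_of_lt_leastPos {d : ℕ} (hd : 0 < d) (h : d < leastPos P) : ¬ P d :=
  fun hP => Nat.notMem_of_lt_sInf h ⟨hd, hP⟩

lemma leastPos_eq {r : ℕ} (hr0 : 0 < r) (hr : P r) (hmin : ∀ d, 0 < d → d < r → ¬ P d) :
    leastPos P = r := by
  refine le_antisymm (leastPos_le hr0 hr) (not_lt.1 fun h => ?_)
  have := leastPos_spec ⟨r, hr0, hr⟩
  exact hmin _ this.1 h this.2

end LeastPos

def shift (n x d : ℕ) : ℕ := (x + d) % n

section Shift

variable {n x y d e : ℕ}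

lemma shift_lt (hn : 0 < n) : shift n x d < n := Nat.mod_lt _ hn

lemma shift_zero (hx : x < n) : shift n x 0 = x := by
  simp [shift, Nat.mod_eq_of_lt hx]

lemma shift_shift : shift n (shift n x d) e = shift n x (d + e) := by
  simp [shift, Nat.mod_add_mod, add_assoc]

lemma shift_add_self : shift n x (n + d) = shift n x d := by
  simp [shift, ← add_assoc, add_right_comm x n d]

lemma shift_self (hx : x < n) : shift n x n = x := by
  simpa [shift_zero hx] using shift_add_self (n := n) (x := x) (d := 0)

lemma shift_inj (hd : d < n) (he : e < n) : shift n x d = shift n x e ↔ d = e :=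
  ⟨fun h => Nat.ModEq.eq_of_lt_of_lt (Nat.ModEq.add_left_cancel' x h) hd he, by rintro rfl; rfl⟩

lemma shift_ne_self (hx : x < n) (hd0 : 0 < d) (hd : d < n) : shift n x d ≠ x := fun h =>
  absurd ((shift_inj hd (by omega)).1 (h.trans (shift_zero hx).symm)) hd0.ne'

lemma shift_shift_sub (hde : d ≤ e) (hen : e ≤ n) :
    shift n (shift n x e) (n - d) = shift n x (e - d) := by
  rw [shift_shift, show e + (n - d) = n + (e - d) by omega, shift_add_self]

lemma exists_shift_eq (hx : x < n) (hy : y < n) : ∃ e < n, shift n x e = y := by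
  rcases le_or_gt x y with h | h
  · exact ⟨y - x, by omega, by rw [shift, Nat.add_sub_cancel' h, Nat.mod_eq_of_lt hy]⟩
  · refine ⟨n - (x - y), by omega, ?_⟩
    rw [shift, show x + (n - (x - y)) = y + n by omega, Nat.add_mod_right, Nat.mod_eq_of_lt hy]

lemma cdist_shift (hx : x < n) (he : e ≤ n) : cdist n x (shift n x e) = min e (n - e) := by
  rcases lt_or_ge (x + e) n with h | h
  · rw [shift, Nat.mod_eq_of_lt h]
    simp only [cdist, Nat.dist]
    omega
  · rw [shift, Nat.mod_eq_sub_mod h, Nat.mod_eq_of_lt (by omega)]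
    simp only [cdist, Nat.dist]
    omega

end Shift

def avail (n : ℕ) (O : Finset ℕ) : Finset ℕ := range n \ O

noncomputable def nextDist (n : ℕ) (O : Finset ℕ) (x : ℕ) : ℕ := leastPos fun d => shift n x d ∈ O

noncomputable def prevDist (n : ℕ) (O : Finset ℕ) (x : ℕ) : ℕ :=
  leastPos fun d => shift n x (n - d) ∈ O

noncomputable def pred (n : ℕ) (O : Finset ℕ) (x : ℕ) : ℕ := shift n x (n - prevDist n O x)

noncomputable def gapMultiset (n : ℕ) (O : Finset ℕ) : Multiset ℕ :=
  ∑ y ∈ O, S (nextDist n O y - 1)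

noncomputable def maxDist (n : ℕ) (O : Finset ℕ) : ℕ := (avail n O).sup (cdistTo n O)

noncomputable def c1Choices (n : ℕ) (O : Finset ℕ) : Finset ℕ :=
  (avail n O).filter fun x => cdistTo n O x = maxDist n O

section Arcs

variable {n : ℕ} {O : Finset ℕ} {x y c d : ℕ}

lemma mem_avail : x ∈ avail n O ↔ x < n ∧ x ∉ O := by
  simp [avail]

lemma avail_insert : avail n (insert x O) = (avail n O).erase x := by
  ext a
  simp only [mem_avail, mem_insert, mem_erase]
  tauto

lemma shift_not_mem_of_lt_nextDist (hd : 0 < d) (h : d < nextDist n O x) : shift n x d ∉ O :=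
  not_of_lt_leastPos (P := fun d => shift n x d ∈ O) hd h

lemma shift_sub_not_mem_of_lt_prevDist (hd : 0 < d) (h : d < prevDist n O x) :
    shift n x (n - d) ∉ O :=
  not_of_lt_leastPos (P := fun d => shift n x (n - d) ∈ O) hd h

lemma nextDist_spec_of_mem (hO : O ⊆ range n) (hy : y ∈ O) :
    0 < nextDist n O y ∧ nextDist n O y ≤ n ∧ shift n y (nextDist n O y) ∈ O := by
  have hyn := mem_range.1 (hO hy)
  have hself : shift n y n ∈ O := by rwa [shift_self hyn]
  have hspec := leastPos_spec (P := fun d => shift n y d ∈ O) ⟨n, by omega, hself⟩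
  exact ⟨hspec.1, leastPos_le (P := fun d => shift n y d ∈ O) (by omega) hself, hspec.2⟩

lemma exists_shift_mem (hO : O ⊆ range n) (hne : O.Nonempty) (hx : x ∈ avail n O) :
    ∃ d, 0 < d ∧ d < n ∧ shift n x d ∈ O := by
  obtain ⟨y, hy⟩ := hne
  obtain ⟨hxn, hxO⟩ := mem_avail.1 hx
  obtain ⟨e, hen, rfl⟩ := exists_shift_eq hxn (mem_range.1 (hO hy))
  refine ⟨e, Nat.pos_of_ne_zero fun he => ?_, hen, hy⟩
  rw [he, shift_zero hxn] at hy
  exact hxO hy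

lemma nextDist_spec (hO : O ⊆ range n) (hne : O.Nonempty) (hx : x ∈ avail n O) :
    0 < nextDist n O x ∧ nextDist n O x < n ∧ shift n x (nextDist n O x) ∈ O := by
  obtain ⟨d, hd0, hdn, hd⟩ := exists_shift_mem hO hne hx
  have hspec := leastPos_spec (P := fun d => shift n x d ∈ O) ⟨d, hd0, hd⟩
  exact ⟨hspec.1, (leastPos_le (P := fun d => shift n x d ∈ O) hd0 hd).trans_lt hdn, hspec.2⟩

lemma prevDist_spec (hO : O ⊆ range n) (hne : O.Nonempty) (hx : x ∈ avail n O) :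
    0 < prevDist n O x ∧ prevDist n O x < n ∧ shift n x (n - prevDist n O x) ∈ O := by
  obtain ⟨d, hd0, hdn, hd⟩ := exists_shift_mem hO hne hx
  have hd' : shift n x (n - (n - d)) ∈ O := by rwa [Nat.sub_sub_self hdn.le]
  have hspec := leastPos_spec (P := fun d => shift n x (n - d) ∈ O) ⟨n - d, by omega, hd'⟩
  exact ⟨hspec.1, (leastPos_le (P := fun d => shift n x (n - d) ∈ O) (by omega) hd').trans_lt
    (by omega), hspec.2⟩

lemma prevDist_add_nextDist_le (hO : O ⊆ range n) (hne : O.Nonempty) (hx : x ∈ avail n O) :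
    prevDist n O x + nextDist n O x ≤ n := by
  obtain ⟨hL0, hLn, hL⟩ := prevDist_spec hO hne hx
  exact not_lt.1 fun h => shift_not_mem_of_lt_nextDist (by omega) (by omega) hL

lemma shift_mem_avail (hO : O ⊆ range n) (hy : y ∈ O) (hc0 : 0 < c) (hc : c < nextDist n O y) :
    shift n y c ∈ avail n O :=
  mem_avail.2 ⟨shift_lt (by have := mem_range.1 (hO hy); omega),
    shift_not_mem_of_lt_nextDist hc0 hc⟩

lemma prevDist_shift (hO : O ⊆ range n) (hy : y ∈ O) (hc0 : 0 < c) (hc : c < nextDist n O y) :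
    prevDist n O (shift n y c) = c := by
  obtain ⟨-, hN, -⟩ := nextDist_spec_of_mem hO hy
  refine leastPos_eq (P := fun d => shift n (shift n y c) (n - d) ∈ O) hc0 ?_ fun d hd0 hd => ?_
  · rwa [shift_shift_sub le_rfl (by omega), Nat.sub_self, shift_zero (mem_range.1 (hO hy))]
  · rw [shift_shift_sub hd.le (by omega)]
    exact shift_not_mem_of_lt_nextDist (by omega) (by omega)

lemma nextDist_shift (hO : O ⊆ range n) (hy : y ∈ O) (hc : c < nextDist n O y) :
    nextDist n O (shift n y c) = nextDist n O y - c := by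
  obtain ⟨-, -, hmem⟩ := nextDist_spec_of_mem hO hy
  refine leastPos_eq (P := fun d => shift n (shift n y c) d ∈ O) (by omega) ?_ fun d hd0 hd => ?_
  · rwa [shift_shift, Nat.add_sub_cancel' hc.le]
  · rw [shift_shift]
    exact shift_not_mem_of_lt_nextDist (by omega) (by omega)

lemma pred_shift (hO : O ⊆ range n) (hy : y ∈ O) (hc0 : 0 < c) (hc : c < nextDist n O y) :
    pred n O (shift n y c) = y := by
  obtain ⟨-, hN, -⟩ := nextDist_spec_of_mem hO hy
  rw [pred, prevDist_shift hO hy hc0 hc, shift_shift_sub le_rfl (by omega), Nat.sub_self,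
    shift_zero (mem_range.1 (hO hy))]

lemma pred_mem (hO : O ⊆ range n) (hne : O.Nonempty) (hx : x ∈ avail n O) : pred n O x ∈ O :=
  (prevDist_spec hO hne hx).2.2

lemma shift_pred (hO : O ⊆ range n) (hne : O.Nonempty) (hx : x ∈ avail n O) :
    shift n (pred n O x) (prevDist n O x) = x := by
  rw [pred, shift_shift, Nat.sub_add_cancel (prevDist_spec hO hne hx).2.1.le,
    shift_self (mem_avail.1 hx).1]

lemma nextDist_pred (hO : O ⊆ range n) (hne : O.Nonempty) (hx : x ∈ avail n O) :
    nextDist n O (pred n O x) = prevDist n O x + nextDist n O x := by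
  obtain ⟨hxn, hxO⟩ := mem_avail.1 hx
  obtain ⟨hL0, hLn, -⟩ := prevDist_spec hO hne hx
  obtain ⟨hR0, -, hR⟩ := nextDist_spec hO hne hx
  have hshift : ∀ d, shift n (pred n O x) d = shift n x (n - prevDist n O x + d) :=
    fun d => shift_shift
  refine leastPos_eq (P := fun d => shift n (pred n O x) d ∈ O) (by omega) ?_ fun d hd0 hd => ?_
  · rwa [← shift_shift, shift_pred hO hne hx]
  · rw [hshift]
    rcases lt_trichotomy d (prevDist n O x) with h | rfl | h
    · rw [show n - prevDist n O x + d = n - (prevDist n O x - d) by omega]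
      exact shift_sub_not_mem_of_lt_prevDist (by omega) (by omega)
    · rwa [Nat.sub_add_cancel hLn.le, shift_self hxn]
    · rw [show n - prevDist n O x + d = n + (d - prevDist n O x) by omega, shift_add_self]
      exact shift_not_mem_of_lt_nextDist (by omega) (by omega)

lemma cdistTo_le (hy : y ∈ O) : cdistTo n O x ≤ cdist n x y := Nat.sInf_le ⟨y, hy, rfl⟩

lemma cdistTo_eq_min (hO : O ⊆ range n) (hne : O.Nonempty) (hx : x ∈ avail n O) :
    cdistTo n O x = min (prevDist n O x) (nextDist n O x) := by
  obtain ⟨hxn, hxO⟩ := mem_avail.1 hx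
  obtain ⟨hL0, hLn, hL⟩ := prevDist_spec hO hne hx
  obtain ⟨hR0, hRn, hR⟩ := nextDist_spec hO hne hx
  have hLR := prevDist_add_nextDist_le hO hne hx
  refine le_antisymm ?_ (le_csInf ?_ ?_)
  · rcases le_total (prevDist n O x) (nextDist n O x) with h | h
    · have := cdistTo_le (n := n) (x := x) hL
      rwa [cdist_shift hxn (by omega), Nat.sub_sub_self hLn.le, min_eq_right (by omega),
        ← min_eq_left h] at this
    · have := cdistTo_le (n := n) (x := x) hR
      rwa [cdist_shift hxn hRn.le, min_eq_left (by omega), ← min_eq_right h] at this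
  · obtain ⟨y, hy⟩ := hne
    exact ⟨_, y, hy, rfl⟩
  · rintro _ ⟨y, hy, rfl⟩
    obtain ⟨e, hen, rfl⟩ := exists_shift_eq hxn (mem_range.1 (hO hy))
    have he0 : e ≠ 0 := by rintro rfl; rw [shift_zero hxn] at hy; exact hxO hy
    have hRe : nextDist n O x ≤ e := leastPos_le (P := fun d => shift n x d ∈ O) (by omega) hy
    have hLe : prevDist n O x ≤ n - e :=
      leastPos_le (P := fun d => shift n x (n - d) ∈ O) (by omega)
        (by rwa [Nat.sub_sub_self hen.le])
    rw [cdist_shift hxn hen.le]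
    omega

lemma nextDist_insert_of_forall_ne {z : ℕ} (h : ∃ d, 0 < d ∧ shift n z d ∈ O)
    (hx : ∀ d, 0 < d → d < nextDist n O z → shift n z d ≠ x) :
    nextDist n (insert x O) z = nextDist n O z := by
  obtain ⟨h0, hmem⟩ := leastPos_spec h
  refine leastPos_eq (P := fun d => shift n z d ∈ insert x O) h0 (mem_insert_of_mem hmem)
    fun d hd0 hd => ?_
  rw [mem_insert, not_or]
  exact ⟨hx d hd0 hd, shift_not_mem_of_lt_nextDist hd0 hd⟩

lemma nextDist_insert_shift {z : ℕ} (hc0 : 0 < c) (hc : c < nextDist n O z) (hcn : c < n) :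
    nextDist n (insert (shift n z c) O) z = c := by
  refine leastPos_eq (P := fun d => shift n z d ∈ insert (shift n z c) O) hc0 (mem_insert_self _ _)
    fun d hd0 hd => ?_
  rw [mem_insert, not_or, shift_inj (by omega) hcn]
  exact ⟨by omega, shift_not_mem_of_lt_nextDist hd0 (by omega)⟩

lemma gapMultiset_insert (hO : O ⊆ range n) (hne : O.Nonempty) (hx : x ∈ avail n O) :
    gapMultiset n (insert x O) + S (prevDist n O x + nextDist n O x - 1) =
      gapMultiset n O + S (prevDist n O x - 1) + S (nextDist n O x - 1) := by
  obtain ⟨hxn, hxO⟩ := mem_avail.1 hx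
  obtain ⟨hL0, hLn, -⟩ := prevDist_spec hO hne hx
  obtain ⟨hR0, hRn, hR⟩ := nextDist_spec hO hne hx
  have hy := pred_mem hO hne hx
  have hself : nextDist n (insert x O) x = nextDist n O x :=
    nextDist_insert_of_forall_ne ⟨_, hR0, hR⟩ fun d hd0 hd => shift_ne_self hxn hd0 (by omega)
  have hpred : nextDist n (insert x O) (pred n O x) = prevDist n O x := by
    have := nextDist_insert_shift (O := O) (z := pred n O x) hL0
      (by rw [nextDist_pred hO hne hx]; omega) hLn
    rwa [shift_pred hO hne hx] at this
  have hother : ∀ z ∈ O.erase (pred n O x), nextDist n (insert x O) z = nextDist n O z := by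
    intro z hz
    obtain ⟨hzy, hzO⟩ := mem_erase.1 hz
    obtain ⟨hN0, -, hN⟩ := nextDist_spec_of_mem hO hzO
    refine nextDist_insert_of_forall_ne ⟨_, hN0, hN⟩ fun d hd0 hd hdx => hzy ?_
    rw [← pred_shift hO hzO hd0 hd, hdx]
  rw [gapMultiset, gapMultiset, sum_insert hxO, ← add_sum_erase O _ hy, ← add_sum_erase O _ hy,
    hself, hpred, sum_congr rfl fun z hz => by rw [hother z hz], nextDist_pred hO hne hx]
  abel

lemma mem_c1Choices :
    x ∈ c1Choices n O ↔ x ∈ avail n O ∧ ∀ q ∈ avail n O, cdistTo n O q ≤ cdistTo n O x := by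
  rw [c1Choices, mem_filter, maxDist]
  exact and_congr_right fun hx => ⟨fun h q hq => h ▸ le_sup (f := cdistTo n O) hq,
    fun h => le_antisymm (le_sup (f := cdistTo n O) hx) (Finset.sup_le h)⟩

lemma c1Choices_subset_avail : c1Choices n O ⊆ avail n O := filter_subset _ _

lemma c1Choices_nonempty (h : (avail n O).Nonempty) : (c1Choices n O).Nonempty := by
  obtain ⟨x, hx, hsup⟩ := exists_mem_eq_sup _ h (cdistTo n O)
  exact ⟨x, mem_filter.2 ⟨hx, hsup.symm⟩⟩

lemma half_nextDist_le_maxDist (hO : O ⊆ range n) (hne : O.Nonempty) (hy : y ∈ O) :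
    nextDist n O y / 2 ≤ maxDist n O := by
  rcases lt_or_ge (nextDist n O y) 2 with h | h
  · omega
  have hc : nextDist n O y / 2 < nextDist n O y := by omega
  have hx := shift_mem_avail hO hy (by omega) hc
  have := le_sup (f := cdistTo n O) hx
  rwa [cdistTo_eq_min hO hne hx, prevDist_shift hO hy (by omega) hc, nextDist_shift hO hy hc,
    min_eq_left (by omega)] at this

lemma maxDist_pos (hO : O ⊆ range n) (hne : O.Nonempty) (h : (avail n O).Nonempty) :
    0 < maxDist n O := by
  obtain ⟨x, hx⟩ := h
  have hle := le_sup (f := cdistTo n O) hx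
  rw [cdistTo_eq_min hO hne hx] at hle
  exact (lt_min (prevDist_spec hO hne hx).1 (nextDist_spec hO hne hx).1).trans_le hle

lemma min_prevDist_nextDist_of_mem (hO : O ⊆ range n) (hne : O.Nonempty)
    (hx : x ∈ c1Choices n O) : min (prevDist n O x) (nextDist n O x) = maxDist n O := by
  obtain ⟨hav, hmax⟩ := mem_filter.1 hx
  rwa [cdistTo_eq_min hO hne hav] at hmax

lemma prevDist_add_nextDist_div_two_of_mem (hO : O ⊆ range n) (hne : O.Nonempty)
    (hx : x ∈ c1Choices n O) : (prevDist n O x + nextDist n O x) / 2 = maxDist n O := by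
  have hav := c1Choices_subset_avail hx
  have hlev := half_nextDist_le_maxDist hO hne (pred_mem hO hne hav)
  have hmin := min_prevDist_nextDist_of_mem hO hne hx
  rw [nextDist_pred hO hne hav] at hlev
  omega

lemma gapMultiset_eq_cons (hO : O ⊆ range n) (hne : O.Nonempty) (hx : x ∈ c1Choices n O) :
    gapMultiset n O = (nextDist n O (pred n O x) - 1) ::ₘ gapMultiset n (insert x O) := by
  have hav := c1Choices_subset_avail hx
  have hbal := prevDist_add_nextDist_div_two_of_mem hO hne hx
  have hmin := min_prevDist_nextDist_of_mem hO hne hx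
  have hL0 := (prevDist_spec hO hne hav).1
  have hR0 := (nextDist_spec hO hne hav).1
  set L := prevDist n O x
  set R := nextDist n O x
  have hsplit : S ((L + R - 1 - 1) / 2) + S ((L + R - 1) / 2) = S (L - 1) + S (R - 1) := by
    rcases (show (L - 1 = (L + R - 1 - 1) / 2 ∧ R - 1 = (L + R - 1) / 2) ∨
        (L - 1 = (L + R - 1) / 2 ∧ R - 1 = (L + R - 1 - 1) / 2) by omega) with ⟨h1, h2⟩ | ⟨h1, h2⟩
    · rw [h1, h2]
    · rw [h1, h2, add_comm]
  have h := gapMultiset_insert hO hne hav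
  rw [S_eq_cons (by omega), hsplit, Multiset.add_cons, ← Multiset.cons_add, add_assoc] at h
  rw [nextDist_pred hO hne hav]
  exact (add_right_cancel h).symm

lemma filter_c1Choices_pred_eq (hO : O ⊆ range n) (hne : O.Nonempty) (hy : y ∈ O) :
    {x ∈ c1Choices n O | pred n O x = y} =
      {c ∈ Icc 1 (nextDist n O y - 1) | min c (nextDist n O y - 1 + 1 - c) = maxDist n O}.image
        (shift n y) := by
  obtain ⟨hN0, -, -⟩ := nextDist_spec_of_mem hO hy
  ext x
  simp only [mem_filter, mem_image, mem_Icc]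
  constructor
  · rintro ⟨hx, rfl⟩
    have hav := c1Choices_subset_avail hx
    have hR0 := (nextDist_spec hO hne hav).1
    refine ⟨prevDist n O x, ⟨⟨(prevDist_spec hO hne hav).1, ?_⟩, ?_⟩, shift_pred hO hne hav⟩
    · rw [nextDist_pred hO hne hav]
      omega
    · rw [nextDist_pred hO hne hav, ← min_prevDist_nextDist_of_mem hO hne hx]
      congr 1
      omega
  · rintro ⟨c, ⟨⟨hc1, hcN⟩, hmin⟩, rfl⟩
    have hc : c < nextDist n O y := by omega
    have hav := shift_mem_avail hO hy (by omega) hc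
    refine ⟨mem_filter.2 ⟨hav, ?_⟩, pred_shift hO hy (by omega) hc⟩
    rw [cdistTo_eq_min hO hne hav, prevDist_shift hO hy (by omega) hc, nextDist_shift hO hy hc,
      ← hmin]
    congr 1
    omega

lemma card_filter_c1Choices_pred (hO : O ⊆ range n) (hne : O.Nonempty) (hy : y ∈ O) :
    #{x ∈ c1Choices n O | pred n O x = y} =
      #{c ∈ Icc 1 (nextDist n O y - 1) | min c (nextDist n O y - 1 + 1 - c) = maxDist n O} := by
  obtain ⟨hN0, hNn, -⟩ := nextDist_spec_of_mem hO hy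
  rw [filter_c1Choices_pred_eq hO hne hy, Finset.card_image_of_injOn]
  intro c hc d hd h
  have hcg := (mem_Icc.1 (mem_filter.1 hc).1).2
  have hdg := (mem_Icc.1 (mem_filter.1 hd).1).2
  exact (shift_inj (by omega) (by omega)).1 h

lemma G_gapMultiset_eq (hO : O ⊆ range n) (hne : O.Nonempty) (hx : x ∈ c1Choices n O) :
    levelCount (gapMultiset n O) (maxDist n O) * evenFactor (nextDist n O (pred n O x) - 1) *
      G (gapMultiset n (insert x O)) = G (gapMultiset n O) := by
  have hbal := prevDist_add_nextDist_div_two_of_mem hO hne hx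
  have hN := nextDist_pred hO hne (c1Choices_subset_avail hx)
  have hK := maxDist_pos hO hne ⟨x, c1Choices_subset_avail hx⟩
  rw [show maxDist n O = (nextDist n O (pred n O x) - 1 + 1) / 2 by omega,
    gapMultiset_eq_cons hO hne hx, G_cons (by omega)]

lemma levelCount_gapMultiset_pos (hO : O ⊆ range n) (hne : O.Nonempty)
    (h : (avail n O).Nonempty) : 0 < levelCount (gapMultiset n O) (maxDist n O) := by
  obtain ⟨x, hx⟩ := c1Choices_nonempty h
  have hbal := prevDist_add_nextDist_div_two_of_mem hO hne hx
  have hN := nextDist_pred hO hne (c1Choices_subset_avail hx)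
  have hK := maxDist_pos hO hne h
  rw [gapMultiset_eq_cons hO hne hx, levelCount_cons (by omega) hK, if_pos (by omega)]
  omega

lemma sum_filter_c1Choices_pred (hO : O ⊆ range n) (hne : O.Nonempty)
    (h : (avail n O).Nonempty) (hy : y ∈ O) :
    ∑ x ∈ c1Choices n O with pred n O x = y,
        levelCount (gapMultiset n O) (maxDist n O) * G (gapMultiset n (insert x O)) =
      levelCount (S (nextDist n O y - 1)) (maxDist n O) * G (gapMultiset n O) := by
  have hlev := half_nextDist_le_maxDist hO hne hy
  have hN0 := (nextDist_spec_of_mem hO hy).1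
  have hK := maxDist_pos hO hne h
  apply Nat.eq_of_mul_eq_mul_left (evenFactor_pos (nextDist n O y - 1))
  rw [mul_sum, ← mul_assoc, ← card_filter_min_eq hK (by omega),
    ← card_filter_c1Choices_pred hO hne hy, card_eq_sum_ones, sum_mul, one_mul]
  refine sum_congr rfl fun x hx => ?_
  obtain ⟨hxc, rfl⟩ := mem_filter.1 hx
  rw [← G_gapMultiset_eq hO hne hxc]
  ring

lemma sum_G_gapMultiset_insert (hO : O ⊆ range n) (hne : O.Nonempty) (h : (avail n O).Nonempty) :
    ∑ x ∈ c1Choices n O, G (gapMultiset n (insert x O)) = G (gapMultiset n O) := by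
  apply Nat.eq_of_mul_eq_mul_left (levelCount_gapMultiset_pos hO hne h)
  calc
    _ = ∑ y ∈ O, ∑ x ∈ c1Choices n O with pred n O x = y,
          levelCount (gapMultiset n O) (maxDist n O) * G (gapMultiset n (insert x O)) := by
      rw [mul_sum, sum_fiberwise_of_maps_to (s := c1Choices n O) (g := pred n O)
        fun x hx => pred_mem hO hne (c1Choices_subset_avail hx)]
    _ = ∑ y ∈ O, levelCount (S (nextDist n O y - 1)) (maxDist n O) * G (gapMultiset n O) :=
      sum_congr rfl fun y hy => sum_filter_c1Choices_pred hO hne h hy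
    _ = levelCount (gapMultiset n O) (maxDist n O) * G (gapMultiset n O) := by
      rw [← sum_mul, ← levelCount_sum]
      rfl

lemma gapMultiset_eq_zero (hO : O ⊆ range n) (h : avail n O = ∅) : gapMultiset n O = 0 := by
  refine sum_eq_zero fun y hy => ?_
  obtain ⟨hN0, -, -⟩ := nextDist_spec_of_mem hO hy
  obtain hN | hN := (show nextDist n O y = 1 ∨ 1 < nextDist n O y by omega)
  · rw [hN, Nat.sub_self, S]
  · simpa [h] using shift_mem_avail hO hy one_pos hN

lemma gapMultiset_singleton (hx : x < n) : gapMultiset n {x} = S (n - 1) := by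
  have hN : nextDist n {x} x = n :=
    leastPos_eq (P := fun d => shift n x d ∈ ({x} : Finset ℕ)) (by omega)
      (by simp [shift_self hx]) fun d hd0 hd => by
        rw [mem_singleton]
        exact shift_ne_self hx hd0 hd
  rw [gapMultiset, sum_singleton, hN]

lemma cdistTo_empty (n x : ℕ) : cdistTo n ∅ x = 0 := by
  simp [cdistTo]

end Arcs

noncomputable def greedySeqs (n : ℕ) : (k : ℕ) → Finset ℕ → Finset (Fin k → ℕ)
  | 0, _ => {Fin.elim0}
  | k + 1, O => (c1Choices n O).biUnion fun x =>
      (greedySeqs n k (insert x O)).image (Fin.cons (α := fun _ => ℕ) x)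

def prefixImage {k : ℕ} (f : Fin k → ℕ) (i : Fin k) : Finset ℕ := (Iio i).image f

section GreedySeqs

variable {n k : ℕ} {O : Finset ℕ}

lemma prefixImage_zero (f : Fin (k + 1) → ℕ) : prefixImage f 0 = ∅ := by
  rw [prefixImage, show (0 : Fin (k + 1)) = ⊥ from rfl, Iio_bot, image_empty]

lemma prefixImage_succ (f : Fin (k + 1) → ℕ) (i : Fin k) :
    prefixImage f i.succ = insert (f 0) (prefixImage (Fin.tail f) i) := by
  ext x
  simp only [prefixImage, mem_image, mem_Iio, mem_insert, Fin.exists_fin_succ, Fin.succ_pos,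
    Fin.succ_lt_succ_iff, true_and, Fin.tail]
  exact or_congr_left eq_comm

lemma mem_greedySeqs {f : Fin k → ℕ} :
    f ∈ greedySeqs n k O ↔ ∀ i, f i ∈ c1Choices n (O ∪ prefixImage f i) := by
  induction k generalizing O with
  | zero => simp [greedySeqs, Subsingleton.elim f Fin.elim0]
  | succ k ih =>
    simp only [Fin.forall_fin_succ, prefixImage_zero, prefixImage_succ, union_empty, union_insert,
      ← insert_union, greedySeqs, mem_biUnion, mem_image]
    constructor
    · rintro ⟨x, hx, g, hg, rfl⟩
      exact ⟨hx, ih.1 hg⟩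
    · rintro ⟨h0, hsucc⟩
      exact ⟨f 0, h0, Fin.tail f, ih.2 hsucc, Fin.cons_self_tail f⟩

lemma card_greedySeqs_succ :
    #(greedySeqs n (k + 1) O) = ∑ x ∈ c1Choices n O, #(greedySeqs n k (insert x O)) := by
  rw [greedySeqs, card_biUnion]
  · exact sum_congr rfl fun x _ =>
      card_image_of_injective _ (Fin.cons_right_injective (α := fun _ => ℕ) x)
  · intro x _ y _ hxy
    simp only [Function.onFun, disjoint_left, mem_image]
    rintro _ ⟨f, -, rfl⟩ ⟨g, -, h⟩
    exact hxy (by simpa using (congrFun h 0).symm)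

lemma card_greedySeqs (hO : O ⊆ range n) (hne : O.Nonempty) (hk : #(avail n O) = k) :
    #(greedySeqs n k O) = G (gapMultiset n O) := by
  induction k generalizing O with
  | zero => rw [gapMultiset_eq_zero hO (card_eq_zero.1 hk), G_zero, greedySeqs, card_singleton]
  | succ k ih =>
    have h : (avail n O).Nonempty := card_pos.1 (by omega)
    rw [card_greedySeqs_succ, ← sum_G_gapMultiset_insert hO hne h]
    refine sum_congr rfl fun x hx => ih ?_ (insert_nonempty x O) ?_
    · exact insert_subset (mem_range.2 (mem_avail.1 (c1Choices_subset_avail hx)).1) hO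
    · rw [avail_insert, card_erase_of_mem (c1Choices_subset_avail hx), hk, Nat.add_sub_cancel]

lemma card_greedySeqs_empty (hn : 1 ≤ n) : #(greedySeqs n n ∅) = n * G (S (n - 1)) := by
  obtain ⟨m, rfl⟩ : ∃ m, n = m + 1 := ⟨n - 1, by omega⟩
  -- The distance to the empty set is `sInf ∅ = 0`, so the first person may sit anywhere.
  have hfirst : c1Choices (m + 1) ∅ = range (m + 1) := by
    ext x
    simp [mem_c1Choices, mem_avail, cdistTo_empty]
  have hsingle : ∀ r ∈ range (m + 1), #(greedySeqs (m + 1) m (insert r ∅)) = G (S m) := by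
    intro r hr
    have hr := mem_range.1 hr
    rw [card_greedySeqs (by simpa using hr) (insert_nonempty r ∅), insert_empty,
      gapMultiset_singleton hr, Nat.add_sub_cancel]
    rw [avail_insert, avail, sdiff_empty, card_erase_of_mem (mem_range.2 hr), card_range,
      Nat.add_sub_cancel]
  rw [card_greedySeqs_succ, hfirst, Nat.add_sub_cancel, sum_congr rfl hsingle, sum_const,
    card_range, smul_eq_mul]

end GreedySeqs

lemma occSet_eq {n : ℕ} (p : Fin n → Fin n) (i : Fin n) :
    occSet n p i = ↑(prefixImage (fun j => (p j : ℕ)) i) := by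
  ext x
  simp [occSet, prefixImage]

lemma isC1_iff_mem_greedySeqs {n : ℕ} (p : Fin n → Fin n) :
    IsC1 n p ↔ (fun i => (p i : ℕ)) ∈ greedySeqs n n ∅ := by
  simp only [mem_greedySeqs, empty_union, mem_c1Choices, mem_avail]
  constructor
  · rintro ⟨hbij, hrule⟩ i
    refine ⟨⟨(p i).2, fun hmem => ?_⟩, fun q hq => ?_⟩
    · obtain ⟨j, hj, hji⟩ := mem_image.1 hmem
      exact (mem_Iio.1 hj).ne (hbij.1 (Fin.ext hji))
    · rcases Nat.eq_zero_or_pos i with h0 | hpos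
      · have : prefixImage (fun j => (p j : ℕ)) i = ∅ := by
          ext x
          simp [prefixImage, Fin.lt_def, h0]
        simp [this, cdistTo_empty]
      · have := hrule i hpos q hq.1 (by rw [occSet_eq]; exact_mod_cast hq.2)
        rwa [occSet_eq] at this
  · intro h
    refine ⟨Finite.injective_iff_bijective.1 fun i j hij => ?_, fun i _ q hq hqO => ?_⟩
    · by_contra hne
      rcases lt_or_gt_of_ne hne with hlt | hlt
      · exact (h j).1.2 (mem_image.2 ⟨i, mem_Iio.2 hlt, by rw [hij]⟩)
      · exact (h i).1.2 (mem_image.2 ⟨j, mem_Iio.2 hlt, by rw [hij]⟩)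
    · rw [occSet_eq] at hqO ⊢
      exact (h i).2 q ⟨hq, hqO⟩

lemma card_isC1 (n : ℕ) : Nat.card {p : Fin n → Fin n // IsC1 n p} = #(greedySeqs n n ∅) := by
  rw [← Nat.card_eq_finsetCard]
  refine Nat.card_congr (Equiv.ofBijective
    (fun p => ⟨fun i => (p.1 i : ℕ), (isC1_iff_mem_greedySeqs p.1).1 p.2⟩)
    ⟨fun p q h => ?_, fun f => ?_⟩)
  · exact Subtype.ext (funext fun i => Fin.ext (congrFun (congrArg Subtype.val h) i))
  · have hlt : ∀ i, f.1 i < n := fun i =>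
      (mem_avail.1 (c1Choices_subset_avail ((mem_greedySeqs.1 f.2) i))).1
    exact ⟨⟨fun i => ⟨f.1 i, hlt i⟩, (isC1_iff_mem_greedySeqs _).2 f.2⟩, rfl⟩

lemma payCount_eq_card {n : ℕ} {T : (Fin n → Fin n) → Prop}
    (hT : ∀ p, T p → Function.Bijective p) : payCount n T = Nat.card {p // T p} := by
  have key : ∀ π : Equiv.Perm (Fin n), (∃ p, T p ∧ ∀ i, π (p i) = i) ↔ T π.symm := fun π =>
    ⟨fun ⟨p, hp, hπ⟩ => by
      rwa [show p = π.symm from funext fun i => (Equiv.eq_symm_apply π).2 (hπ i)] at hp,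
     fun h => ⟨π.symm, h, π.apply_symm_apply⟩⟩
  rw [payCount, Nat.card_congr (Equiv.subtypeEquivRight key)]
  refine Nat.card_congr
    (Equiv.ofBijective (fun π => ⟨π.1.symm, π.2⟩) ⟨fun π σ h => ?_, fun p => ?_⟩)
  · exact Subtype.ext
      (Equiv.symm_bijective.injective (Equiv.coe_fn_injective (congrArg Subtype.val h)))
  · exact ⟨⟨(Equiv.ofBijective p.1 (hT _ p.2)).symm, p.2⟩, rfl⟩

end Payphone

/-- Theorem 3: `C₁(n) = n · G(S(n−1))`. -/
theorem stmt8 (n : ℕ) (hn : 1 ≤ n) :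
    payCount n (IsC1 n) = n * G (S (n - 1)) := by
  rw [Payphone.payCount_eq_card fun p hp => hp.1, Payphone.card_isC1,
    Payphone.card_greedySeqs_empty hn]
end

section
/- Define f(n) := #_1 S(n−1) for integers n ≥ 1. Then f(1) = 0, f(2) = 1, and f(n) = f(⌊n/2⌋) + f(⌈n/2⌉) for every integer n ≥ 3. -/
open Nat

theorem count_S_succ_of_ne {k : ℕ} (n : ℕ) (hk : k ≠ n + 1) :
    (S (n + 1)).count k = (S (n / 2)).count k + (S ((n + 1) / 2)).count k := by
  rw [S, Multiset.count_cons_of_ne hk, Multiset.count_add]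

/-- The function `f(n) := #₁ S(n−1)` satisfies `f(1) = 0`, `f(2) = 1` and
`f(n) = f(⌊n/2⌋) + f(⌈n/2⌉)` for `n ≥ 3`. -/
theorem stmt14 (f : ℕ → ℕ) (hf : ∀ n : ℕ, 1 ≤ n → f n = Multiset.count 1 (S (n - 1))) :
    f 1 = 0 ∧ f 2 = 1 ∧ ∀ n : ℕ, 3 ≤ n → f n = f (n / 2) + f ((n + 1) / 2) := by
  refine ⟨by simp [hf 1 le_rfl, S], by simp [hf 2 one_le_two, S], fun n hn => ?_⟩
  obtain ⟨m, rfl⟩ : ∃ m, n = m + 3 := ⟨n - 3, by omega⟩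
  rw [hf _ (by omega), hf _ (by omega), hf _ (by omega)]
  have hlo : (m + 3) / 2 - 1 = (m + 1) / 2 := by omega
  have hhi : (m + 3 + 1) / 2 - 1 = (m + 1 + 1) / 2 := by omega
  rw [hlo, hhi]
  exact count_S_succ_of_ne (m + 1) (by omega)
end
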